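/- The correspondence relation is preserved by a unit-delay transition of the corner-point abstraction: if ν corresponds with (r, α, t), α(z) = 0, and r ⊭ z = 0, then ν corresponds with (r, succ(α), t+1). -/
import Mathlib


inductive Iota | LESS | MORE | EXACT
deriving DecidableEq

open Classical in
/-- The classification `ι(r,α)` of a region `r` and corner point `α`
relative to the distinguished clock `z`. -/
noncomputable def iota {C : Type*} (z : C) (r : Set (C → ℝ)) (α : C → ℕ) : Iota :=
  if α z = 1 ∧ ¬ (∀ ν ∈ r, ν z = 1) then .LESS
  else if α z = 0 ∧ ¬ (∀ ν ∈ r, ν z = 0) then .MORE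
  else .EXACT

/-- `f(r,α)` is `1` if `ι(r,α) = LESS`, otherwise `0`. -/
noncomputable def fval {C : Type*} (z : C) (r : Set (C → ℝ)) (α : C → ℕ) : ℕ :=
  if iota z r α = .LESS then 1 else 0

/-- `ν` (split into its restriction `νhat` to the nonparametric clocks and the
value `νp` of the parametric clock) corresponds with `(r, α, t)`. -/
noncomputable def Corr {C : Type*} (z : C) (r : Set (C → ℝ)) (α : C → ℕ)
    (t : ℕ) (νhat : C → ℝ) (νp : ℝ) : Prop :=
  νhat ∈ r ∧ (⌊νp⌋ + (fval z r α : ℤ) = (t : ℤ)) ∧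
  ((∃ n : ℕ, νp = n) ↔ iota z r α = .EXACT)

/-- Successor of an `(M+1)`-corner point. -/
def cpSucc {C : Type*} (M : ℕ) (α : C → ℕ) : C → ℕ :=
  fun x => if α x ≤ M then α x + 1 else M + 1

/-- Correspondence is preserved by a unit-delay transition of the corner-point
abstraction: if `ν` corresponds with `(r, α, t)`, `α(z) = 0`, and `r ⊭ z = 0`,
then `ν` corresponds with `(r, succ(α), t+1)`. -/
theorem corr_unit_delay {C : Type*} (M : ℕ) (hM : 1 ≤ M) (z : C)
    (r : Set (C → ℝ)) (α : C → ℕ) (t : ℕ) (νhat : C → ℝ) (νp : ℝ)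
    (hcorr : Corr z r α t νhat νp)
    (hαz : α z = 0) (hrz : ¬ (∀ ν ∈ r, ν z = 0))
    (hfract : Int.fract νp = νhat z) (hzpos : 0 < νhat z) (hzle : νhat z ≤ 1) :
    Corr z r (cpSucc M α) (t + 1) νhat νp := by
  obtain ⟨hmem, hfloor, hiff⟩ := hcorr
  have hαz1 : α z ≠ 1 := by omega
  have hiotaold : iota z r α = .MORE := by
    unfold iota
    rw [if_neg (by tauto), if_pos ⟨hαz, hrz⟩]
  have hzlt : νhat z < 1 := by
    rw [← hfract]; exact Int.fract_lt_one νp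
  have hnotall : ¬ (∀ ν ∈ r, ν z = 1) := by
    intro h; exact absurd (h νhat hmem) (by linarith)
  have hsuccz : cpSucc M α z = 1 := by simp [cpSucc, hαz, hM]
  have hiotanew : iota z r (cpSucc M α) = .LESS := by
    unfold iota
    rw [if_pos ⟨hsuccz, hnotall⟩]
  refine ⟨hmem, ?_, ?_⟩
  · have h0 : fval z r α = 0 := by simp [fval, hiotaold]
    have h1 : fval z r (cpSucc M α) = 1 := by simp [fval, hiotanew]
    rw [h0] at hfloor
    rw [h1]
    push_cast
    push_cast at hfloor
    linarith
  · rw [hiotanew]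
    simp only [hiotaold] at hiff
    constructor
    · intro h; exact absurd (hiff.mp h) (by decide)
    · intro h; exact absurd h (by decide)
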